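/- arXiv:2301.11699 — 2 statements merged into one kernel-verified Lean document; each statement's English description precedes it below -/
import Mathlib

section
/- (Proposition 3.2.) Let d be a positive natural number and let x_0, x_i, μ ∈ ℝ^d. Let λ be a nonzero real and let a > 0, c > 0 (representing θ̄_{i−1} = ∫_0^{i−1} θ_t dt and θ′_i = ∫_{i−1}^{i} θ_t dt, so that θ̄_i = a + c). Define the negative log-likelihood F : ℝ^d → ℝ (up to the additive normalizing constants) by F(y) = ‖x_i − μ − e^{−c}·(y − μ)‖² / (2·λ²·(1 − e^{−2c})) + ‖y − μ − e^{−a}·(x_0 − μ)‖² / (2·λ²·(1 − e^{−2a})). Then the point x* := ((1 − e^{−2a})/(1 − e^{−2(a+c)}))·e^{−c}·(x_i − μ) + ((1 − e^{−2c})/(1 − e^{−2(a+c)}))·e^{−a}·(x_0 − μ) + μ is the unique global minimizer of F; that is, F(x*) < F(y) for every y ≠ x*. -/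
open Real RealInnerProductSpace

set_option maxHeartbeats 1000000 in
/-- Proposition 3.2: the point `x*` is the unique global minimizer of the
negative log-likelihood `F(y) = ‖x_i − μ − e^{−c}(y − μ)‖²/(2λ²(1 − e^{−2c}))
+ ‖y − μ − e^{−a}(x_0 − μ)‖²/(2λ²(1 − e^{−2a}))`. -/
theorem irsde_optimal_reverse_state
    (d : ℕ) (hd : 0 < d) (x0 xi μ : EuclideanSpace ℝ (Fin d))
    (lam : ℝ) (hlam : lam ≠ 0) (a c : ℝ) (ha : 0 < a) (hc : 0 < c)
    (F : EuclideanSpace ℝ (Fin d) → ℝ)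
    (hF : ∀ y, F y =
      ‖xi - μ - Real.exp (-c) • (y - μ)‖ ^ 2 / (2 * lam ^ 2 * (1 - Real.exp (-(2 * c)))) +
      ‖y - μ - Real.exp (-a) • (x0 - μ)‖ ^ 2 / (2 * lam ^ 2 * (1 - Real.exp (-(2 * a)))))
    (xstar : EuclideanSpace ℝ (Fin d))
    (hxstar : xstar =
      ((1 - Real.exp (-(2 * a))) / (1 - Real.exp (-(2 * (a + c))))) •
        (Real.exp (-c) • (xi - μ)) +
      ((1 - Real.exp (-(2 * c))) / (1 - Real.exp (-(2 * (a + c))))) •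
        (Real.exp (-a) • (x0 - μ)) + μ) :
    ∀ y, y ≠ xstar → F xstar < F y := by
  intro y hy
  set s : ℝ := Real.exp (-a) with hs
  set t : ℝ := Real.exp (-c) with ht
  have hs0 : 0 < s := Real.exp_pos _
  have ht0 : 0 < t := Real.exp_pos _
  have hs1 : s < 1 := by rw [hs]; exact Real.exp_lt_one_iff.mpr (by linarith)
  have ht1 : t < 1 := by rw [ht]; exact Real.exp_lt_one_iff.mpr (by linarith)
  have e2a : Real.exp (-(2 * a)) = s ^ 2 := by
    rw [hs, show -(2 * a) = -a + -a by ring, Real.exp_add]; ring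
  have e2c : Real.exp (-(2 * c)) = t ^ 2 := by
    rw [ht, show -(2 * c) = -c + -c by ring, Real.exp_add]; ring
  have e2ac : Real.exp (-(2 * (a + c))) = s ^ 2 * t ^ 2 := by
    rw [hs, ht, show -(2 * (a + c)) = (-a + -a) + (-c + -c) by ring,
      Real.exp_add, Real.exp_add, Real.exp_add]; ring
  have hl2 : 0 < lam ^ 2 := by positivity
  have hDs : 0 < 1 - s ^ 2 := by nlinarith
  have hDt : 0 < 1 - t ^ 2 := by nlinarith
  have hD : (0 : ℝ) < 1 - s ^ 2 * t ^ 2 := by nlinarith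
  have hDne : (1 : ℝ) - s ^ 2 * t ^ 2 ≠ 0 := ne_of_gt hD
  have hDne' : (1 : ℝ) - t ^ 2 * s ^ 2 ≠ 0 := by rw [mul_comm]; exact hDne
  set P : ℝ := 2 * lam ^ 2 * (1 - t ^ 2) with hP
  set Q : ℝ := 2 * lam ^ 2 * (1 - s ^ 2) with hQ
  have hP0 : 0 < P := by positivity
  have hQ0 : 0 < Q := by positivity
  set w : EuclideanSpace ℝ (Fin d) := (xi - μ) - (t * s) • (x0 - μ) with hw
  set u : EuclideanSpace ℝ (Fin d) := y - xstar with hu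
  have hu0 : u ≠ 0 := sub_ne_zero.mpr hy
  set α : ℝ := (1 - t ^ 2) / (1 - s ^ 2 * t ^ 2) with hα
  set β : ℝ := t * (1 - s ^ 2) / (1 - s ^ 2 * t ^ 2) with hβ
  have hX : xstar - μ = β • (xi - μ) + (α * s) • (x0 - μ) := by
    rw [hxstar, e2a, e2c, e2ac, hα, hβ]
    module
  have hv1 : (xi - μ) - t • (xstar - μ) = α • w := by
    rw [hX, hw, hα, hβ]
    match_scalars <;> (field_simp; try ring) <;> tauto
  have hv2 : (xstar - μ) - s • (x0 - μ) = β • w := by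
    rw [hX, hw, hα, hβ]
    match_scalars <;> (field_simp; try ring) <;> tauto
  have hyμ : y - μ = (xstar - μ) + u := by rw [hu]; abel
  have harg1 : xi - μ - t • (y - μ) = α • w - t • u := by
    rw [hyμ, smul_add, ← hv1]; abel
  have harg2 : y - μ - s • (x0 - μ) = β • w + u := by
    rw [hyμ, ← hv2]; abel
  have expand1 : ‖xi - μ - t • (y - μ)‖ ^ 2
      = α ^ 2 * ‖w‖ ^ 2 - 2 * (α * t) * ⟪w, u⟫ + t ^ 2 * ‖u‖ ^ 2 := by
    rw [harg1, norm_sub_sq_real, real_inner_smul_left, real_inner_smul_right,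
      norm_smul, norm_smul, Real.norm_eq_abs, Real.norm_eq_abs, mul_pow, mul_pow,
      sq_abs, sq_abs]
    ring
  have expand2 : ‖y - μ - s • (x0 - μ)‖ ^ 2
      = β ^ 2 * ‖w‖ ^ 2 + 2 * β * ⟪w, u⟫ + ‖u‖ ^ 2 := by
    rw [harg2, norm_add_sq_real, real_inner_smul_left, norm_smul, Real.norm_eq_abs, mul_pow, sq_abs]
    ring
  have hFstar : F xstar = (α ^ 2 * ‖w‖ ^ 2) / P + (β ^ 2 * ‖w‖ ^ 2) / Q := by
    rw [hF, e2a, e2c, hv1, hv2, norm_smul, norm_smul, Real.norm_eq_abs,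
      Real.norm_eq_abs, mul_pow, mul_pow, sq_abs, sq_abs, ← hP, ← hQ]
  have hFy : F y = (α ^ 2 * ‖w‖ ^ 2 - 2 * (α * t) * ⟪w, u⟫ + t ^ 2 * ‖u‖ ^ 2) / P
      + (β ^ 2 * ‖w‖ ^ 2 + 2 * β * ⟪w, u⟫ + ‖u‖ ^ 2) / Q := by
    rw [hF, e2a, e2c, expand1, expand2, ← hP, ← hQ]
  have hcross : -2 * (α * t) / P + 2 * β / Q = 0 := by
    rw [hα, hβ, hP, hQ]
    have h1 : (1 : ℝ) - t ^ 2 ≠ 0 := ne_of_gt hDt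
    have h2 : (1 : ℝ) - s ^ 2 ≠ 0 := ne_of_gt hDs
    have h4 : lam ^ 2 ≠ 0 := ne_of_gt hl2
    field_simp
    ring
  have hdiff : F y - F xstar = (t ^ 2 / P + 1 / Q) * ‖u‖ ^ 2
      + (-2 * (α * t) / P + 2 * β / Q) * ⟪w, u⟫ := by
    rw [hFy, hFstar]
    ring
  rw [hcross] at hdiff
  have hnu : 0 < ‖u‖ ^ 2 := by
    have : 0 < ‖u‖ := norm_pos_iff.mpr hu0
    positivity
  have hK : 0 < t ^ 2 / P + 1 / Q := by positivity
  nlinarith [mul_pos hK hnu]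
end

section
/- (Optimal reverse state for the Denoising SDE, Appendix D.) Let d be a positive natural number and let x_0, x_i ∈ ℝ^d. Let λ be a nonzero real and let a > 0, c > 0. Define F(y) = ‖x_i − x_0 − e^{−c}·(y − x_0)‖² / (2·λ²·(1 − e^{−2c})) + ‖y − x_0‖² / (2·λ²·(1 − e^{−2a})). Then the unique global minimizer of F is x* = ((1 − e^{−2a})/(1 − e^{−2(a+c)}))·e^{−c}·(x_i − x_0) + x_0. -/
/-!
Writing `u = y - x₀`, `v = xᵢ - x₀` and `q = e^{-c}`, the objective is the positive definite
quadratic `α‖v - q u‖² + β‖u‖²`. Completing the square around `t v`, where `t` solves the normal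
equation `(α q² + β) t = α q`, exhibits the excess `F y - F x*` as `(α q² + β)‖u - t v‖²`; in terms
of the exponentials, `t = (1 - e^{-2a}) e^{-c} / (1 - e^{-2(a+c)})`.
-/

open Real

section CompletingTheSquare

variable {E : Type*} [NormedAddCommGroup E] [InnerProductSpace ℝ E]

theorem weighted_sq_norm_eq_add_sq_norm_sub {α β q t : ℝ} (ht : (α * q ^ 2 + β) * t = α * q)
    (u v : E) :
    α * ‖v - q • u‖ ^ 2 + β * ‖u‖ ^ 2 =
      α * ‖v - q • t • v‖ ^ 2 + β * ‖t • v‖ ^ 2 + (α * q ^ 2 + β) * ‖u - t • v‖ ^ 2 := by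
  simp only [← real_inner_self_eq_norm_sq, inner_sub_left, inner_sub_right, inner_smul_left,
    inner_smul_right, real_inner_comm v u, RCLike.conj_to_real]
  linear_combination (2 * inner ℝ v u - 2 * t * inner ℝ v v) * ht

theorem weighted_sq_norm_lt_of_ne {α β q t : ℝ} (hα : 0 < α) (hβ : 0 < β)
    (ht : (α * q ^ 2 + β) * t = α * q) {u v : E} (hu : u ≠ t • v) :
    α * ‖v - q • t • v‖ ^ 2 + β * ‖t • v‖ ^ 2 < α * ‖v - q • u‖ ^ 2 + β * ‖u‖ ^ 2 := by
  rw [weighted_sq_norm_eq_add_sq_norm_sub ht u v, lt_add_iff_pos_right]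
  have : 0 < ‖u - t • v‖ := norm_pos_iff.mpr (sub_ne_zero.mpr hu)
  positivity

end CompletingTheSquare

theorem denoising_coeff_normal_eq {k A q : ℝ} (hk : k ≠ 0) (hA : A < 1)
    (hq : q ^ 2 < 1) :
    ((k * (1 - q ^ 2))⁻¹ * q ^ 2 + (k * (1 - A))⁻¹) * ((1 - A) / (1 - A * q ^ 2) * q) =
      (k * (1 - q ^ 2))⁻¹ * q := by
  have hAq : A * q ^ 2 < 1 := by nlinarith [sq_nonneg q]
  have h₁ : 1 - q ^ 2 ≠ 0 := by linarith
  have h₂ : 1 - A ≠ 0 := by linarith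
  have h₃ : 1 - q ^ 2 * A ≠ 0 := by linarith
  field_simp
  ring

theorem denoising_sde_optimal_reverse_state_general
    (d : ℕ) (x0 xi : EuclideanSpace ℝ (Fin d))
    (lam : ℝ) (hlam : lam ≠ 0) (a c : ℝ) (ha : 0 < a) (hc : 0 < c)
    (F : EuclideanSpace ℝ (Fin d) → ℝ)
    (hF : ∀ y, F y =
      ‖xi - x0 - Real.exp (-c) • (y - x0)‖ ^ 2 / (2 * lam ^ 2 * (1 - Real.exp (-(2 * c)))) +
      ‖y - x0‖ ^ 2 / (2 * lam ^ 2 * (1 - Real.exp (-(2 * a)))))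
    (xstar : EuclideanSpace ℝ (Fin d))
    (hxstar : xstar =
      ((1 - Real.exp (-(2 * a))) / (1 - Real.exp (-(2 * (a + c))))) •
        (Real.exp (-c) • (xi - x0)) + x0) :
    ∀ y, y ≠ xstar → F xstar < F y := by
  intro y hy
  set q := exp (-c)
  set A := exp (-(2 * a))
  have hq₂ : exp (-(2 * c)) = q ^ 2 := by rw [sq, ← exp_add]; ring_nf
  have hAq : exp (-(2 * (a + c))) = A * q ^ 2 := by rw [← hq₂, ← exp_add]; ring_nf
  have hA : A < 1 := exp_lt_one_iff.mpr (by linarith)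
  have hq : q ^ 2 < 1 := hq₂ ▸ exp_lt_one_iff.mpr (by linarith)
  have hF' : ∀ z, F z = (2 * lam ^ 2 * (1 - q ^ 2))⁻¹ * ‖xi - x0 - q • (z - x0)‖ ^ 2 +
      (2 * lam ^ 2 * (1 - A))⁻¹ * ‖z - x0‖ ^ 2 := by
    intro z
    rw [hF, hq₂, div_eq_inv_mul, div_eq_inv_mul]
  have hxs : xstar - x0 = ((1 - A) / (1 - A * q ^ 2) * q) • (xi - x0) := by
    rw [hxstar, hAq, add_sub_cancel_right, smul_smul]
  rw [hF', hF', hxs]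
  have hk₀ : 0 < 2 * lam ^ 2 := by positivity
  refine weighted_sq_norm_lt_of_ne (inv_pos.mpr (mul_pos hk₀ (sub_pos.mpr hq)))
    (inv_pos.mpr (mul_pos hk₀ (sub_pos.mpr hA)))
    (denoising_coeff_normal_eq hk₀.ne' hA hq) ?_
  rw [← hxs]
  exact fun h => hy (sub_left_injective h)

/-- Optimal reverse state for the Denoising SDE (Appendix D): the unique global minimizer
of `F(y) = ‖x_i − x_0 − e^{−c}(y − x_0)‖²/(2λ²(1 − e^{−2c})) + ‖y − x_0‖²/(2λ²(1 − e^{−2a}))`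
is `x* = ((1 − e^{−2a})/(1 − e^{−2(a+c)}))·e^{−c}·(x_i − x_0) + x_0`. -/
theorem denoising_sde_optimal_reverse_state
    (d : ℕ) (hd : 0 < d) (x0 xi : EuclideanSpace ℝ (Fin d))
    (lam : ℝ) (hlam : lam ≠ 0) (a c : ℝ) (ha : 0 < a) (hc : 0 < c)
    (F : EuclideanSpace ℝ (Fin d) → ℝ)
    (hF : ∀ y, F y =
      ‖xi - x0 - Real.exp (-c) • (y - x0)‖ ^ 2 / (2 * lam ^ 2 * (1 - Real.exp (-(2 * c)))) +
      ‖y - x0‖ ^ 2 / (2 * lam ^ 2 * (1 - Real.exp (-(2 * a)))))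
    (xstar : EuclideanSpace ℝ (Fin d))
    (hxstar : xstar =
      ((1 - Real.exp (-(2 * a))) / (1 - Real.exp (-(2 * (a + c))))) •
        (Real.exp (-c) • (xi - x0)) + x0) :
    ∀ y, y ≠ xstar → F xstar < F y :=
  denoising_sde_optimal_reverse_state_general d x0 xi lam hlam a c ha hc F hF xstar hxstar
end
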